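/- Let p be a prime, let K be the completion of the rational function field C_p(T) with respect to the Gauss norm (the multiplicative norm on C_p[T] given by |Σ a_i T^i| = max_i |a_i|), and let L = K(S) where S^p = T. Then the different of L/K equals |p|: that is, the supremum of the absolute values of elements of the annihilator of the torsion O_L-module Ω_{O_L/O_K} equals |p|, where O_K and O_L are the rings of elements of absolute value at most 1 in K and L respectively. -/

import Mathlib

/-!
Since `|S| = 1` and `|p| < 1`, for `g ∈ K[X]` of degree `< p` the Frobenius congruence gives
`g(S)^p ≡ ∑ gᵢ^p Tⁱ (mod p)`. The residue field of `K` is that of `C_p(T)`, namely `k(t)` with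
`k` of characteristic `p`, and `1, t, …, t^(p-1)` are linearly independent over `k(t)^p`;
concretely `|∑_{i<p} bᵢ^p Tⁱ| ≥ maxᵢ |bᵢ|^p`. For polynomials `bᵢ = Fᵢ(T)` this holds because,
modulo `p`, the sum is a polynomial in `T` whose coefficients `a_{ik}^p` sit at the distinct
exponents `i + kp`; general `bᵢ` are reduced to this by approximating them in `C_p(T)` and
clearing denominators. Hence `|g(S)| ≥ maxᵢ |gᵢ|`, so `O_L = O_K[S] ≅ O_K[X]/(X^p - T)`. For a
monogenic extension `B = A[X]/(f)` the module `Ω_{B/A}` is generated by `ds` and has annihilator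
`(f'(s))`; here `f'(S) = p S^(p-1)`, whose multiples have absolute value at most `|p|`.
-/

/-- The unit ball of a non-archimedean absolute value on a field, as a subring. -/
def unitBall {F : Type*} [Field F] (w : AbsoluteValue F ℝ) (hw : IsNonarchimedean w) :
    Subring F where
  carrier := {x | w x ≤ 1}
  one_mem' := by simp [w.map_one]
  mul_mem' := fun {a b} ha hb => by
    simpa [w.map_mul] using mul_le_one₀ ha (w.nonneg b) hb
  zero_mem' := by simp [w.map_zero]
  add_mem' := fun {a b} ha hb => le_trans (hw a b) (max_le ha hb)
  neg_mem' := fun {a} ha => by simpa [w.map_neg] using ha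

/-- The inclusion `O_K → O_L` induced by an embedding of valued fields `K → L` whose absolute
value `w'` extends that of `K`. -/
def unitBallHom {K L : Type*} [Field K] [Field L] [Algebra K L]
    (w : AbsoluteValue K ℝ) (hw : IsNonarchimedean w)
    (w' : AbsoluteValue L ℝ) (hw' : IsNonarchimedean w')
    (hext : ∀ x : K, w' (algebraMap K L x) = w x) :
    unitBall w hw →+* unitBall w' hw' where
  toFun x := ⟨algebraMap K L x.1, show w' _ ≤ 1 by rw [hext]; exact x.2⟩
  map_one' := Subtype.ext (map_one _)
  map_mul' x y := Subtype.ext (map_mul _ _ _)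
  map_zero' := Subtype.ext (map_zero _)
  map_add' x y := Subtype.ext (map_add _ _ _)

/-- The different δ_{L/K} of an extension of non-archimedeanly valued fields: the supremum of
the absolute values of the elements of the annihilator of the O_L-module Ω_{O_L/O_K}. -/
noncomputable def valuedDifferent {K L : Type*} [Field K] [Field L] [Algebra K L]
    (w : AbsoluteValue K ℝ) (hw : IsNonarchimedean w)
    (w' : AbsoluteValue L ℝ) (hw' : IsNonarchimedean w')
    (hext : ∀ x : K, w' (algebraMap K L x) = w x) : ℝ :=
  letI : Algebra (unitBall w hw) (unitBall w' hw') :=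
    (unitBallHom w hw w' hw' hext).toAlgebra
  sSup ((fun c : unitBall w' hw' => w' c.1) ''
    ((Module.annihilator (unitBall w' hw')
      (KaehlerDifferential (unitBall w hw) (unitBall w' hw'))) : Set (unitBall w' hw')))

open Polynomial Finset

namespace IsNonarchimedean

section Semiring
variable {R : Type*} [Semiring R] {w : AbsoluteValue R ℝ}

lemma apply_sum_le_of_forall_le (hw : IsNonarchimedean w) {ι : Type*} {s : Finset ι}
    {x : ι → R} {C : ℝ} (hC : 0 ≤ C) (h : ∀ i ∈ s, w (x i) ≤ C) : w (∑ i ∈ s, x i) ≤ C := by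
  rcases s.eq_empty_or_nonempty with rfl | hs
  · simpa using hC
  · exact (hw.apply_sum_le_sup hs).trans (sup'_le _ _ h)

lemma apply_sum_lt_of_forall_lt (hw : IsNonarchimedean w) {ι : Type*} {s : Finset ι}
    {x : ι → R} {C : ℝ} (hC : 0 < C) (h : ∀ i ∈ s, w (x i) < C) : w (∑ i ∈ s, x i) < C := by
  rcases s.eq_empty_or_nonempty with rfl | hs
  · simpa using hC
  · exact (hw.apply_sum_le_sup hs).trans_lt ((sup'_lt_iff _).mpr h)

end Semiring

section CommRing
variable {R : Type*} [CommRing R] {w : AbsoluteValue R ℝ}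

lemma apply_eq_of_apply_sub_lt (hw : IsNonarchimedean w) {x y : R} (h : w (x - y) < w x) :
    w y = w x := by
  have := hw.add_eq_left_of_lt (x := x) (y := y - x) (by rwa [← AbsoluteValue.map_neg, neg_sub])
  simpa using this

variable [Nontrivial R]

lemma apply_pow_sub_pow_le (hw : IsNonarchimedean w) {x y : R} {M : ℝ} (hx : w x ≤ M)
    (hy : w y ≤ M) (n : ℕ) : w (x ^ n - y ^ n) ≤ M ^ (n - 1) * w (x - y) := by
  have hM : 0 ≤ M := (w.nonneg x).trans hx
  rw [← geom_sum₂_mul, map_mul]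
  refine mul_le_mul_of_nonneg_right (hw.apply_sum_le_of_forall_le (pow_nonneg hM _)
    fun k hk => ?_) (w.nonneg _)
  rw [map_mul, map_pow, map_pow]
  calc w x ^ k * w y ^ (n - 1 - k) ≤ M ^ k * M ^ (n - 1 - k) := by gcongr
    _ = M ^ (n - 1) := by rw [← pow_add]; grind

lemma apply_add_pow_sub_le (hw : IsNonarchimedean w) {p : ℕ} (hp : p.Prime) {x y : R} {M : ℝ}
    (hx : w x ≤ M) (hy : w y ≤ M) : w ((x + y) ^ p - x ^ p - y ^ p) ≤ w p * M ^ p := by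
  have hM : 0 ≤ M := (w.nonneg x).trans hx
  set c := ∑ k ∈ Ioo 0 p, x ^ (k - 1) * y ^ (p - k - 1) * ((p.choose k / p : ℕ) : R)
  have hc : w c ≤ M ^ (p - 2) := by
    refine hw.apply_sum_le_of_forall_le (by positivity) fun k hk => ?_
    obtain ⟨hk0, hkp⟩ := mem_Ioo.mp hk
    rw [map_mul, map_mul, map_pow, map_pow, show p - 2 = (k - 1) + (p - k - 1) by omega, pow_add]
    refine mul_le_of_le_one_right (by positivity) hw.apply_natCast_le_one |>.trans ?_
    gcongr
  rw [add_pow_prime_eq hp, add_sub_right_comm, add_sub_cancel_left, add_sub_cancel_left, map_mul,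
    map_mul, map_mul]
  calc w p * w x * w y * w c ≤ w p * M * M * M ^ (p - 2) := by gcongr
    _ = w p * M ^ p := by
        rw [mul_assoc, mul_assoc, ← pow_succ', ← pow_succ', show p - 2 + 1 + 1 = p by
          have := hp.two_le; omega]

lemma apply_sum_pow_sub_sum_pow_le (hw : IsNonarchimedean w) {p : ℕ} (hp : p.Prime)
    {ι : Type*} (s : Finset ι) {x : ι → R} {M : ℝ} (hM : 0 ≤ M) (hx : ∀ i ∈ s, w (x i) ≤ M) :
    w ((∑ i ∈ s, x i) ^ p - ∑ i ∈ s, x i ^ p) ≤ w p * M ^ p := by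
  induction s using Finset.cons_induction with
  | empty => simp [zero_pow hp.ne_zero]; positivity
  | cons a t ha ih =>
    rw [forall_mem_cons] at hx
    have hsplit : (∑ i ∈ cons a t ha, x i) ^ p - ∑ i ∈ cons a t ha, x i ^ p =
        ((x a + ∑ i ∈ t, x i) ^ p - x a ^ p - (∑ i ∈ t, x i) ^ p) +
          ((∑ i ∈ t, x i) ^ p - ∑ i ∈ t, x i ^ p) := by
      rw [sum_cons, sum_cons]
      ring
    rw [hsplit]
    exact (hw _ _).trans (max_le (hw.apply_add_pow_sub_le hp hx.1
      (hw.apply_sum_le_of_forall_le hM hx.2)) (ih hx.2))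

end CommRing
end IsNonarchimedean

section Monogenic

variable {A B : Type*} [CommRing A] [CommRing B] [Algebra A B] {s : B} {f : A[X]}

lemma aeval_eq_zero_of_ker_eq_span (hker : RingHom.ker (aeval s) = Ideal.span {f}) :
    aeval s f = 0 :=
  RingHom.mem_ker.mp (hker ▸ Ideal.mem_span_singleton_self f)

lemma mk_aeval_derivative_eq_of_ker_eq_span (hker : RingHom.ker (aeval s) = Ideal.span {f})
    {g h : A[X]} (hgh : aeval s g = aeval s h) :
    Ideal.Quotient.mk (Ideal.span {aeval s (derivative f)}) (aeval s (derivative g)) =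
      Ideal.Quotient.mk _ (aeval s (derivative h)) := by
  obtain ⟨q, hq⟩ : f ∣ g - h := Ideal.mem_span_singleton.mp <| hker ▸ RingHom.mem_ker.mpr
    (by rw [map_sub, hgh, sub_self])
  rw [Ideal.Quotient.eq, ← map_sub, ← derivative_sub, hq, derivative_mul, map_add, map_mul,
    map_mul, aeval_eq_zero_of_ker_eq_span hker, zero_mul, add_zero]
  exact Ideal.mul_mem_right _ _ (Ideal.mem_span_singleton_self _)

lemma exists_derivation_quotient_derivative_apply_eq_one
    (hsurj : Function.Surjective (aeval s : A[X] →ₐ[A] B))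
    (hker : RingHom.ker (aeval s) = Ideal.span {f}) :
    ∃ D : Derivation A B (B ⧸ Ideal.span {aeval s (derivative f)}), D s = 1 := by
  let I := Ideal.span {aeval s (derivative f)}
  let φ : A[X] →ₗ[A] B ⧸ I :=
    (Ideal.Quotient.mkₐ A I).toLinearMap ∘ₗ (aeval s).toLinearMap ∘ₗ derivative
  let lift := Function.surjInv hsurj
  have hφlift (g : A[X]) : φ (lift (aeval s g)) = φ g :=
    mk_aeval_derivative_eq_of_ker_eq_span hker (Function.surjInv_eq hsurj _)
  refine ⟨{ toFun := fun b => φ (lift b)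
            map_add' := fun x y => ?_
            map_smul' := fun a x => ?_
            map_one_eq_zero' := ?_
            leibniz' := fun x y => ?_ }, ?_⟩
  · obtain ⟨⟨g, rfl⟩, ⟨h, rfl⟩⟩ := And.intro (hsurj x) (hsurj y)
    show φ (lift (aeval s g + aeval s h)) = φ (lift (aeval s g)) + φ (lift (aeval s h))
    rw [← map_add, hφlift, hφlift, hφlift, map_add]
  · obtain ⟨g, rfl⟩ := hsurj x
    show φ (lift (a • aeval s g)) = a • φ (lift (aeval s g))
    rw [← map_smul, hφlift, hφlift, map_smul]
  · show φ (lift 1) = 0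
    rw [← map_one (aeval (R := A) s), hφlift]
    simp [φ]
  · obtain ⟨⟨g, rfl⟩, ⟨h, rfl⟩⟩ := And.intro (hsurj x) (hsurj y)
    show φ (lift (aeval s g * aeval s h)) =
      aeval s g • φ (lift (aeval s h)) + aeval s h • φ (lift (aeval s g))
    rw [← map_mul, hφlift, hφlift, hφlift]
    simp [φ, derivative_mul, Algebra.smul_def]
    ring
  · show φ (lift s) = 1
    rw [← aeval_X (R := A) s, hφlift]
    simp [φ]

lemma span_singleton_D_eq_top (hsurj : Function.Surjective (aeval s : A[X] →ₐ[A] B)) :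
    Submodule.span B {KaehlerDifferential.D A B s} = ⊤ := by
  rw [eq_top_iff, ← KaehlerDifferential.span_range_derivation, Submodule.span_le]
  rintro _ ⟨b, rfl⟩
  obtain ⟨g, rfl⟩ := hsurj b
  rw [Derivation.map_aeval]
  exact Submodule.smul_mem _ _ (Submodule.subset_span rfl)

theorem annihilator_kaehlerDifferential_eq_span_derivative
    (hsurj : Function.Surjective (aeval s : A[X] →ₐ[A] B))
    (hker : RingHom.ker (aeval s) = Ideal.span {f}) :
    Module.annihilator B Ω[B⁄A] = Ideal.span {aeval s (derivative f)} := by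
  ext c
  rw [← Submodule.annihilator_top, ← span_singleton_D_eq_top hsurj,
    Submodule.mem_annihilator_span_singleton, Ideal.mem_span_singleton']
  constructor
  · intro hc
    obtain ⟨D, hD⟩ := exists_derivation_quotient_derivative_apply_eq_one hsurj hker
    have := congrArg D.liftKaehlerDifferential hc
    rw [map_smul, Derivation.liftKaehlerDifferential_comp_D, hD, map_zero, Algebra.smul_def,
      mul_one, Ideal.Quotient.algebraMap_eq] at this
    exact Ideal.mem_span_singleton'.mp (Ideal.Quotient.eq_zero_iff_mem.mp this)
  · rintro ⟨b, rfl⟩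
    rw [mul_smul, ← Derivation.map_aeval, aeval_eq_zero_of_ker_eq_span hker, map_zero, smul_zero]

end Monogenic

section GaussNorm

variable {Cp K : Type*} [CommRing Cp] [Field K] [Algebra Cp K]
  {v : AbsoluteValue Cp ℝ} {w : AbsoluteValue K ℝ} {T : K}

lemma bddAbove_range_apply_coeff (v : AbsoluteValue Cp ℝ) (f : Cp[X]) :
    BddAbove (Set.range fun i => v (f.coeff i)) := by
  refine ⟨∑ i ∈ f.support, v (f.coeff i), ?_⟩
  rintro _ ⟨i, rfl⟩
  by_cases hi : i ∈ f.support
  · exact single_le_sum (fun i _ => v.nonneg _) hi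
  · simp only [notMem_support_iff.mp hi, map_zero]
    exact sum_nonneg fun i _ => v.nonneg _

lemma apply_coeff_le_of_gauss (hGauss : ∀ f : Cp[X], w (aeval T f) = ⨆ i, v (f.coeff i))
    (f : Cp[X]) (i : ℕ) : v (f.coeff i) ≤ w (aeval T f) :=
  (hGauss f).symm ▸ le_ciSup (bddAbove_range_apply_coeff v f) i

lemma apply_aeval_le_of_gauss (hGauss : ∀ f : Cp[X], w (aeval T f) = ⨆ i, v (f.coeff i))
    {f : Cp[X]} {M : ℝ} (h : ∀ i, v (f.coeff i) ≤ M) : w (aeval T f) ≤ M :=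
  (hGauss f).symm ▸ ciSup_le h

lemma apply_eq_one_of_gauss [Nontrivial Cp]
    (hGauss : ∀ f : Cp[X], w (aeval T f) = ⨆ i, v (f.coeff i)) : w T = 1 := by
  refine le_antisymm ?_ ?_
  · simpa using apply_aeval_le_of_gauss (f := X) hGauss fun i => by
      rw [coeff_X]; split_ifs <;> simp
  · simpa using apply_coeff_le_of_gauss hGauss X 1

lemma eq_and_eq_of_add_mul_eq_add_mul {p i k i' k' : ℕ} (hi : i < p) (hi' : i' < p)
    (h : i + k * p = i' + k' * p) : i = i' ∧ k = k' := by
  have hp : 0 < p := by omega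
  have hmod := congrArg (· % p) h
  simp only [Nat.add_mul_mod_self_right, Nat.mod_eq_of_lt hi, Nat.mod_eq_of_lt hi'] at hmod
  subst hmod
  exact ⟨rfl, Nat.eq_of_mul_eq_mul_right hp (by omega)⟩

lemma coeff_sum_monomial_add_mul {R : Type*} [Semiring R] {p : ℕ} {s : Finset (ℕ × ℕ)}
    (hs : ∀ ik ∈ s, ik.1 < p) (a : ℕ × ℕ → R) {ik : ℕ × ℕ} (hik : ik ∈ s) :
    (∑ x ∈ s, monomial (x.1 + x.2 * p) (a x)).coeff (ik.1 + ik.2 * p) = a ik := by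
  rw [finsetSum_coeff, sum_eq_single_of_mem ik hik, coeff_monomial, if_pos rfl]
  intro x hx hne
  rw [coeff_monomial, if_neg]
  intro h
  obtain ⟨h1, h2⟩ := eq_and_eq_of_add_mul_eq_add_mul (hs x hx) (hs ik hik) h
  exact hne (Prod.ext h1 h2)

lemma apply_sum_aeval_pow_mul_pow_sub_le [Nontrivial Cp] (hw : IsNonarchimedean w)
    (hext : ∀ c : Cp, w (algebraMap Cp K c) = v c) (hT : w T = 1) {p : ℕ} (hp : p.Prime)
    (F : ℕ → Cp[X]) {n N : ℕ} {M : ℝ} (hM : 0 ≤ M) (hdeg : ∀ i ∈ range n, (F i).natDegree < N)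
    (hcoeff : ∀ i ∈ range n, ∀ k, v ((F i).coeff k) ≤ M) :
    w (∑ i ∈ range n, aeval T (F i) ^ p * T ^ i -
      ∑ ik ∈ range n ×ˢ range N, (F ik.1).coeff ik.2 ^ p • T ^ (ik.1 + ik.2 * p)) ≤
        w p * M ^ p := by
  rw [sum_product, ← sum_sub_distrib]
  refine hw.apply_sum_le_of_forall_le (by positivity) fun i hi => ?_
  have hsplit : ∑ k ∈ range N, (F i).coeff k ^ p • T ^ (i + k * p) =
      (∑ k ∈ range N, ((F i).coeff k • T ^ k) ^ p) * T ^ i := by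
    rw [sum_mul]
    refine sum_congr rfl fun k _ => ?_
    rw [Algebra.smul_def, Algebra.smul_def, map_pow]
    ring
  rw [hsplit, ← sub_mul, map_mul, map_pow, hT, one_pow, mul_one, aeval_eq_sum_range' (hdeg i hi)]
  refine hw.apply_sum_pow_sub_sum_pow_le hp _ hM fun k _ => ?_
  rw [Algebra.smul_def, map_mul, hext, map_pow, hT, one_pow, mul_one]
  exact hcoeff i hi k

theorem pow_apply_aeval_le_apply_sum [Nontrivial Cp] (hw : IsNonarchimedean w)
    (hext : ∀ c : Cp, w (algebraMap Cp K c) = v c)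
    (hGauss : ∀ f : Cp[X], w (aeval T f) = ⨆ i, v (f.coeff i)) {p : ℕ} (hp : p.Prime)
    (hwp : w p < 1) (F : ℕ → Cp[X]) {n j : ℕ} (hn : n ≤ p) (hj : j < n) :
    w (aeval T (F j)) ^ p ≤ w (∑ i ∈ range n, aeval T (F i) ^ p * T ^ i) := by
  set N := (range n).sup (fun i => (F i).natDegree) + 1
  have hdeg : ∀ i ∈ range n, (F i).natDegree < N :=
    fun i hi => Nat.lt_succ_of_le (le_sup (f := fun i => (F i).natDegree) hi)
  obtain ⟨⟨i₀, k₀⟩, hmem, hmax⟩ := (range n ×ˢ range N).exists_max_image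
    (fun ik => v ((F ik.1).coeff ik.2)) ⟨(j, 0), by simp [hj, N]⟩
  set M := v ((F i₀).coeff k₀)
  have hM : 0 ≤ M := v.nonneg _
  have hcoeff : ∀ i ∈ range n, ∀ k, v ((F i).coeff k) ≤ M := by
    intro i hi k
    by_cases hk : k < N
    · exact hmax (i, k) (mem_product.mpr ⟨hi, mem_range.mpr hk⟩)
    · rw [coeff_eq_zero_of_natDegree_lt ((hdeg i hi).trans_le (not_lt.mp hk)), map_zero]
      exact hM
  -- Modulo `p`, the sum is `H(T)`; as `i < p`, the monomials of `H` do not overlap.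
  set H : Cp[X] :=
    ∑ ik ∈ range n ×ˢ range N, monomial (ik.1 + ik.2 * p) ((F ik.1).coeff ik.2 ^ p)
  have hH : M ^ p ≤ w (aeval T H) := by
    rw [← map_pow, ← coeff_sum_monomial_add_mul (fun ik hik =>
      (mem_range.mp (mem_product.mp hik).1).trans_le hn) (fun ik => (F ik.1).coeff ik.2 ^ p) hmem]
    exact apply_coeff_le_of_gauss hGauss H _
  have hdiff := apply_sum_aeval_pow_mul_pow_sub_le hw hext (apply_eq_one_of_gauss hGauss) hp F
    hM hdeg hcoeff
  have hHT : aeval T H =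
      ∑ ik ∈ range n ×ˢ range N, (F ik.1).coeff ik.2 ^ p • T ^ (ik.1 + ik.2 * p) := by
    simp only [H, map_sum, aeval_monomial, Algebra.smul_def]
  rw [← hHT] at hdiff
  calc w (aeval T (F j)) ^ p ≤ M ^ p := by
        gcongr
        exact apply_aeval_le_of_gauss hGauss (hcoeff j (mem_range.mpr hj))
    _ ≤ _ := by
      rcases hM.eq_or_lt with h0 | hpos
      · rw [← h0, zero_pow hp.ne_zero]
        exact w.nonneg _
      · refine hH.trans (le_of_eq (hw.apply_eq_of_apply_sub_lt ?_).symm)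
        rw [← AbsoluteValue.map_neg, neg_sub]
        exact hdiff.trans_lt ((mul_lt_of_lt_one_left (pow_pos hpos p) hwp).trans_le hH)

end GaussNorm

section Density

variable {Cp K : Type*} [CommRing Cp] [Nontrivial Cp] [Field K] [Algebra Cp K]
  {v : AbsoluteValue Cp ℝ} {w : AbsoluteValue K ℝ} {T : K} {p : ℕ}

lemma exists_ne_zero_mul_mem_subringClosure {F : Type*} [Field F] {s : Set F} {ι : Type*}
    (t : Finset ι) {y : ι → F} (hy : ∀ i ∈ t, y i ∈ Subfield.closure s) :
    ∃ d ∈ Subring.closure s, d ≠ 0 ∧ ∀ i ∈ t, d * y i ∈ Subring.closure s := by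
  classical
  induction t using Finset.induction_on with
  | empty => exact ⟨1, Subring.one_mem _, one_ne_zero, by simp⟩
  | insert a t _ ih =>
    rw [forall_mem_insert] at hy
    obtain ⟨d, hd, hd0, hdy⟩ := ih hy.2
    obtain ⟨x, hx, z, hz, hxz⟩ := Subfield.mem_closure_iff.mp hy.1
    rcases eq_or_ne z 0 with rfl | hz0
    · refine ⟨d, hd, hd0, forall_mem_insert _ _ _ |>.mpr ⟨?_, hdy⟩⟩
      rw [← hxz, div_zero, mul_zero]
      exact Subring.zero_mem _
    · refine ⟨d * z, mul_mem hd hz, mul_ne_zero hd0 hz0,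
        forall_mem_insert _ _ _ |>.mpr ⟨?_, ?_⟩⟩
      · rw [← hxz, mul_assoc, mul_div_cancel₀ x hz0]
        exact mul_mem hd hx
      · intro i hi
        rw [mul_right_comm]
        exact mul_mem (hdy i hi) hz

theorem pow_apply_le_apply_sum_of_mem_closure (hw : IsNonarchimedean w)
    (hext : ∀ c : Cp, w (algebraMap Cp K c) = v c)
    (hGauss : ∀ f : Cp[X], w (aeval T f) = ⨆ i, v (f.coeff i))
    (hp : p.Prime) (hwp : w p < 1) {y : ℕ → K} {n j : ℕ} (hn : n ≤ p) (hj : j < n)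
    (hy : ∀ i ∈ range n, y i ∈ Subfield.closure (Set.range (algebraMap Cp K) ∪ {T})) :
    w (y j) ^ p ≤ w (∑ i ∈ range n, y i ^ p * T ^ i) := by
  obtain ⟨d, -, hd0, hdy⟩ := exists_ne_zero_mul_mem_subringClosure (range n) hy
  have hpoly : ∀ i ∈ range n, ∃ F : Cp[X], aeval T F = d * y i := by
    intro i hi
    have := hdy i hi
    rwa [← Algebra.adjoin_eq_ring_closure, Subalgebra.mem_toSubring,
      Algebra.adjoin_singleton_eq_range_aeval] at this
  choose! F hF using hpoly
  have key := pow_apply_aeval_le_apply_sum hw hext hGauss hp hwp F hn hj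
  have hsum : ∑ i ∈ range n, aeval T (F i) ^ p * T ^ i =
      d ^ p * ∑ i ∈ range n, y i ^ p * T ^ i := by
    rw [mul_sum]
    exact sum_congr rfl fun i hi => by rw [hF i hi]; ring
  rw [hsum, hF j (mem_range.mpr hj), map_mul, map_mul, mul_pow, map_pow] at key
  exact le_of_mul_le_mul_left key (pow_pos (w.pos hd0) p)

theorem pow_apply_le_apply_sum (hw : IsNonarchimedean w)
    (hext : ∀ c : Cp, w (algebraMap Cp K c) = v c)
    (hGauss : ∀ f : Cp[X], w (aeval T f) = ⨆ i, v (f.coeff i))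
    (hdense : ∀ x : K, ∀ ε : ℝ, 0 < ε →
      ∃ y ∈ Subfield.closure (Set.range (algebraMap Cp K) ∪ {T}), w (x - y) < ε)
    (hp : p.Prime) (hwp : w p < 1) (b : ℕ → K) {n j : ℕ} (hn : n ≤ p) (hj : j < n) :
    w (b j) ^ p ≤ w (∑ i ∈ range n, b i ^ p * T ^ i) := by
  obtain ⟨i₁, hi₁, hmax⟩ :=
    (range n).exists_max_image (fun i => w (b i)) ⟨j, mem_range.mpr hj⟩
  set M := w (b i₁)
  rcases (w.nonneg (b i₁)).eq_or_lt with h0 | hpos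
  · have : w (b j) = 0 := le_antisymm (h0 ▸ hmax j (mem_range.mpr hj)) (w.nonneg _)
    rw [this, zero_pow hp.ne_zero]
    exact w.nonneg _
  choose y hy hby using fun i => hdense (b i) M hpos
  have hyM : ∀ i ∈ range n, w (y i) ≤ M := fun i hi =>
    calc w (y i) = w (b i + -(b i - y i)) := by rw [neg_sub, add_sub_cancel]
      _ ≤ M := (hw _ _).trans <|
          max_le (hmax i hi) (by rw [AbsoluteValue.map_neg]; exact (hby i).le)
  have hclose : w (∑ i ∈ range n, y i ^ p * T ^ i - ∑ i ∈ range n, b i ^ p * T ^ i) < M ^ p := by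
    rw [← sum_sub_distrib]
    refine hw.apply_sum_lt_of_forall_lt (pow_pos hpos p) fun i hi => ?_
    rw [← sub_mul, map_mul, map_pow, apply_eq_one_of_gauss hGauss, one_pow, mul_one]
    calc w (y i ^ p - b i ^ p) ≤ M ^ (p - 1) * w (y i - b i) :=
          hw.apply_pow_sub_pow_le (hyM i hi) (hmax i hi) p
      _ < M ^ (p - 1) * M := by
          gcongr
          rw [← AbsoluteValue.map_neg, neg_sub]
          exact hby i
      _ = M ^ p := pow_sub_one_mul hp.ne_zero M
  have hlow : M ^ p ≤ w (∑ i ∈ range n, y i ^ p * T ^ i) := by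
    have := pow_apply_le_apply_sum_of_mem_closure hw hext hGauss hp hwp hn (mem_range.mp hi₁)
      fun i _ => hy i
    rwa [hw.apply_eq_of_apply_sub_lt (hby i₁)] at this
  calc w (b j) ^ p ≤ M ^ p := by gcongr; exact hmax j (mem_range.mpr hj)
    _ ≤ _ := hlow
    _ = _ := (hw.apply_eq_of_apply_sub_lt (hclose.trans_le hlow)).symm

end Density

section NormFormula

variable {Cp K L : Type*} [CommRing Cp] [Nontrivial Cp] [Field K] [Field L] [Algebra Cp K]
  [Algebra K L] {v : AbsoluteValue Cp ℝ} {w : AbsoluteValue K ℝ} {w' : AbsoluteValue L ℝ}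
  {T : K} {S : L} {p : ℕ}

lemma apply_eq_one_of_pow_eq (hext' : ∀ x : K, w' (algebraMap K L x) = w x)
    (hGauss : ∀ f : Cp[X], w (aeval T f) = ⨆ i, v (f.coeff i)) (hp : p ≠ 0)
    (hS : S ^ p = algebraMap K L T) : w' S = 1 :=
  (pow_eq_one_iff_of_nonneg (w'.nonneg S) hp).mp <| by
    rw [← map_pow, hS, hext', apply_eq_one_of_gauss hGauss]

theorem apply_coeff_le_apply_aeval (hw : IsNonarchimedean w) (hw' : IsNonarchimedean w')
    (hext : ∀ c : Cp, w (algebraMap Cp K c) = v c)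
    (hext' : ∀ x : K, w' (algebraMap K L x) = w x)
    (hGauss : ∀ f : Cp[X], w (aeval T f) = ⨆ i, v (f.coeff i))
    (hdense : ∀ x : K, ∀ ε : ℝ, 0 < ε →
      ∃ y ∈ Subfield.closure (Set.range (algebraMap Cp K) ∪ {T}), w (x - y) < ε)
    (hp : p.Prime) (hwp : w p < 1) (hS : S ^ p = algebraMap K L T)
    {g : K[X]} (hg : g.natDegree < p) (j : ℕ) :
    w (g.coeff j) ≤ w' (aeval S g) := by
  obtain ⟨i₁, hi₁, hmax⟩ :=
    (range p).exists_max_image (fun i => w (g.coeff i)) ⟨0, mem_range.mpr hp.pos⟩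
  set M := w (g.coeff i₁)
  have hcoeff : ∀ k, w (g.coeff k) ≤ M := fun k => by
    by_cases hk : k < p
    · exact hmax k (mem_range.mpr hk)
    · rw [coeff_eq_zero_of_natDegree_lt (hg.trans_le (not_lt.mp hk)), map_zero]
      exact w.nonneg _
  refine (hcoeff j).trans ?_
  rcases (w.nonneg _ : 0 ≤ M).eq_or_lt with h0 | hpos
  · exact h0.symm.le.trans (w'.nonneg _)
  have hS1 : w' S = 1 := apply_eq_one_of_pow_eq hext' hGauss hp.ne_zero hS
  have hfrob := hw'.apply_sum_pow_sub_sum_pow_le hp (range p)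
    (x := fun i => g.coeff i • S ^ i) hpos.le fun i _ => by
      rw [Algebra.smul_def, map_mul, hext', map_pow, hS1, one_pow, mul_one]
      exact hcoeff i
  have hpow : ∑ i ∈ range p, (g.coeff i • S ^ i) ^ p =
      algebraMap K L (∑ i ∈ range p, g.coeff i ^ p * T ^ i) := by
    rw [map_sum]
    refine sum_congr rfl fun i _ => ?_
    rw [Algebra.smul_def, mul_pow, ← pow_mul, mul_comm i p, pow_mul, hS, map_mul, map_pow,
      map_pow]
  rw [← aeval_eq_sum_range' hg, hpow] at hfrob
  have hlow : M ^ p ≤ w' (algebraMap K L (∑ i ∈ range p, g.coeff i ^ p * T ^ i)) := by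
    rw [hext']
    exact pow_apply_le_apply_sum hw hext hGauss hdense hp hwp (g.coeff ·) le_rfl
      (mem_range.mp hi₁)
  have hwp' : w' p * M ^ p < M ^ p := by
    rw [← map_natCast (algebraMap K L), hext']
    exact mul_lt_of_lt_one_left (pow_pos hpos p) hwp
  have heq := hw'.apply_eq_of_apply_sub_lt (y := aeval S g ^ p) <| by
    rw [← AbsoluteValue.map_neg, neg_sub]
    exact (hfrob.trans_lt hwp').trans_le hlow
  rw [map_pow] at heq
  exact (pow_le_pow_iff_left₀ hpos.le (w'.nonneg _) hp.ne_zero).mp (hlow.trans heq.ge)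

end NormFormula

lemma natDegree_modByMonic_X_pow_sub_C_lt {R : Type*} [Ring R] [Nontrivial R] {p : ℕ}
    (hp : p ≠ 0) (g : R[X]) (t : R) : (g %ₘ (X ^ p - C t)).natDegree < p := by
  have hmonic := monic_X_pow_sub_C t hp
  have hne : X ^ p - C t ≠ 1 := fun h => hp <| by
    simpa [h] using (natDegree_X_pow_sub_C (r := t) (n := p)).symm
  simpa [natDegree_X_pow_sub_C] using natDegree_modByMonic_lt g hmonic hne

lemma exists_natDegree_lt_aeval_eq {K L : Type*} [Field K] [Field L] [Algebra K L] {p : ℕ}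
    (hp : p ≠ 0) {S : L} {T : K} (hS : S ^ p = algebraMap K L T)
    (hgen : IntermediateField.adjoin K {S} = ⊤) (x : L) :
    ∃ r : K[X], r.natDegree < p ∧ aeval S r = x := by
  have hf : aeval S (X ^ p - C T) = 0 := by simp [hS]
  have hint : IsIntegral K S := ⟨_, monic_X_pow_sub_C T hp, by rwa [← aeval_def]⟩
  have hx : x ∈ (aeval S : K[X] →ₐ[K] L).range := by
    rw [← Algebra.adjoin_singleton_eq_range_aeval,
      ← IntermediateField.adjoin_simple_toSubalgebra_of_isAlgebraic hint.isAlgebraic, hgen]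
    trivial
  obtain ⟨g, rfl⟩ := hx
  exact ⟨g %ₘ (X ^ p - C T), natDegree_modByMonic_X_pow_sub_C_lt hp g T,
    aeval_modByMonic_eq_self_of_root hf⟩

section UnitBall

variable {K L : Type*} [Field K] [Field L] [Algebra K L] {w : AbsoluteValue K ℝ}
  {w' : AbsoluteValue L ℝ} {hw : IsNonarchimedean w} {hw' : IsNonarchimedean w'}
  [Algebra (unitBall w hw) (unitBall w' hw')]

lemma coe_aeval_unitBall
    (halg : ∀ a : unitBall w hw, (algebraMap _ (unitBall w' hw') a : L) = algebraMap K L a)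
    (s : unitBall w' hw') (g : (unitBall w hw)[X]) :
    (aeval s g : L) = aeval (s : L) (g.map (unitBall w hw).subtype) := by
  induction g using Polynomial.induction_on with
  | C a => simp [halg]
  | add f g hf hg => simp [hf, hg]
  | monomial n a _ => simp [halg]

lemma surjective_aeval_unitBall
    (halg : ∀ a : unitBall w hw, (algebraMap _ (unitBall w' hw') a : L) = algebraMap K L a)
    {s : unitBall w' hw'} {p : ℕ}
    (hrep : ∀ x : L, ∃ r : K[X], r.natDegree < p ∧ aeval (s : L) r = x)
    (hnorm : ∀ r : K[X], r.natDegree < p → ∀ j, w (r.coeff j) ≤ w' (aeval (s : L) r)) :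
    Function.Surjective (aeval s : (unitBall w hw)[X] →ₐ[unitBall w hw] unitBall w' hw') := by
  intro x
  obtain ⟨r, hr, hrx⟩ := hrep x
  have hcoeffs : (r.coeffs : Set K) ⊆ unitBall w hw := by
    intro c hc
    obtain ⟨n, -, rfl⟩ := mem_coeffs_iff.mp hc
    exact (hnorm r hr n).trans (hrx ▸ x.2)
  refine ⟨r.toSubring _ hcoeffs, Subtype.ext ?_⟩
  rw [coe_aeval_unitBall halg, map_toSubring, hrx]

lemma ker_aeval_unitBall
    (halg : ∀ a : unitBall w hw, (algebraMap _ (unitBall w' hw') a : L) = algebraMap K L a)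
    {s : unitBall w' hw'} {t : unitBall w hw} {p : ℕ} (hp : p ≠ 0)
    (hs : s ^ p = algebraMap _ _ t)
    (hnorm : ∀ r : K[X], r.natDegree < p → ∀ j, w (r.coeff j) ≤ w' (aeval (s : L) r)) :
    RingHom.ker (aeval s) = Ideal.span {X ^ p - C t} := by
  have hmonic := monic_X_pow_sub_C t hp
  have hf : aeval s (X ^ p - C t) = 0 := by simp [hs]
  ext g
  rw [RingHom.mem_ker, Ideal.mem_span_singleton, ← modByMonic_eq_zero_iff_dvd hmonic]
  constructor
  · intro hg
    have hr : aeval s (g %ₘ (X ^ p - C t)) = 0 := (aeval_modByMonic_eq_self_of_root hf).trans hg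
    have hdeg : ((g %ₘ (X ^ p - C t)).map (unitBall w hw).subtype).natDegree < p :=
      natDegree_map_le.trans_lt (natDegree_modByMonic_X_pow_sub_C_lt hp g t)
    refine (Polynomial.map_eq_zero_iff (unitBall w hw).subtype_injective).mp (ext fun j => ?_)
    have := hnorm _ hdeg j
    rw [← coe_aeval_unitBall halg, hr, ZeroMemClass.coe_zero, map_zero] at this
    exact w.eq_zero.mp (le_antisymm this (w.nonneg _))
  · intro hg
    rw [← modByMonic_add_div g (X ^ p - C t), hg, zero_add, map_mul, hf, zero_mul]

end UnitBall

lemma isGreatest_image_span_singleton {L : Type*} [Field L] {w' : AbsoluteValue L ℝ}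
    {hw' : IsNonarchimedean w'} (d : unitBall w' hw') :
    IsGreatest ((fun c : unitBall w' hw' => w' c) '' (Ideal.span {d} : Set (unitBall w' hw')))
      (w' d) := by
  refine ⟨⟨d, Ideal.mem_span_singleton_self d, rfl⟩, ?_⟩
  rintro _ ⟨c, hc, rfl⟩
  obtain ⟨y, rfl⟩ := Ideal.mem_span_singleton'.mp hc
  simp only [Subring.coe_mul, map_mul]
  exact mul_le_of_le_one_left (w'.nonneg _) y.2

theorem different_of_pth_root_of_gauss_variable_general
    (p : ℕ) (hp : p.Prime)
    (Cp K L : Type*) [Field Cp] [Field K] [Field L]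
    [Algebra Cp K] [Algebra K L]
    (v : AbsoluteValue Cp ℝ)
    (w : AbsoluteValue K ℝ) (hw : IsNonarchimedean w)
    (w' : AbsoluteValue L ℝ) (hw' : IsNonarchimedean w')
    -- |p| = 1/p in C_p
    (hvp : v (p : Cp) = (p : ℝ)⁻¹)
    -- w extends v and w' extends w
    (hext₁ : ∀ x : Cp, w (algebraMap Cp K x) = v x)
    (hext₂ : ∀ x : K, w' (algebraMap K L x) = w x)
    (T : K)
    -- w is the Gauss norm: |Σ aᵢ Tⁱ| = maxᵢ |aᵢ|
    (hGauss : ∀ f : Polynomial Cp, w (Polynomial.aeval T f) = ⨆ i, v (f.coeff i))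
    -- ... and C_p(T) is dense in K, i.e. K is the completion of C_p(T) under the Gauss norm
    (hdense : ∀ x : K, ∀ ε : ℝ, 0 < ε →
      ∃ y ∈ Subfield.closure (Set.range (algebraMap Cp K) ∪ {T}), w (x - y) < ε)
    -- L = K(S) where S^p = T
    (S : L) (hS : S ^ p = algebraMap K L T)
    (hgen : IntermediateField.adjoin K {S} = ⊤) :
    valuedDifferent w hw w' hw' hext₂ = v (p : Cp) := by
  have hwp : w p = v p := by rw [← map_natCast (algebraMap Cp K), hext₁]
  have hwp' : w' p = v p := by rw [← map_natCast (algebraMap K L), hext₂, hwp]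
  have hwS : w' S = 1 := apply_eq_one_of_pow_eq hext₂ hGauss hp.ne_zero hS
  let s : unitBall w' hw' := ⟨S, hwS.le⟩
  let t : unitBall w hw := ⟨T, (apply_eq_one_of_gauss hGauss).le⟩
  let _ : Algebra (unitBall w hw) (unitBall w' hw') :=
    (unitBallHom w hw w' hw' hext₂).toAlgebra
  have hwp1 : w p < 1 := by
    rw [hwp, hvp]
    exact inv_lt_one_of_one_lt₀ (by exact_mod_cast hp.one_lt)
  have hnorm : ∀ r : K[X], r.natDegree < p → ∀ j, w (r.coeff j) ≤ w' (aeval S r) :=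
    fun r hr => apply_coeff_le_apply_aeval hw hw' hext₁ hext₂ hGauss hdense hp hwp1 hS hr
  have hsurj := surjective_aeval_unitBall (s := s) (fun _ => rfl)
    (exists_natDegree_lt_aeval_eq hp.ne_zero hS hgen) hnorm
  have hker := ker_aeval_unitBall (s := s) (t := t) (fun _ => rfl) hp.ne_zero (Subtype.ext hS)
    hnorm
  show sSup _ = _
  rw [annihilator_kaehlerDifferential_eq_span_derivative hsurj hker,
    (isGreatest_image_span_singleton _).csSup_eq]
  simp [s, derivative_X_pow, hwp', hwS]

theorem different_of_pth_root_of_gauss_variable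
    (p : ℕ) (hp : p.Prime)
    (Cp K L : Type*) [Field Cp] [Field K] [Field L]
    [CharZero Cp] [IsAlgClosed Cp] [Algebra Cp K] [Algebra K L]
    (v : AbsoluteValue Cp ℝ) (hv : IsNonarchimedean v)
    (w : AbsoluteValue K ℝ) (hw : IsNonarchimedean w)
    (w' : AbsoluteValue L ℝ) (hw' : IsNonarchimedean w')
    -- |p| = 1/p in C_p
    (hvp : v (p : Cp) = (p : ℝ)⁻¹)
    -- C_p is complete
    (hCpComplete : ∀ s : ℕ → Cp,
      (∀ ε : ℝ, 0 < ε → ∃ N, ∀ m ≥ N, ∀ n ≥ N, v (s m - s n) < ε) →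
      ∃ a : Cp, ∀ ε : ℝ, 0 < ε → ∃ N, ∀ n ≥ N, v (s n - a) < ε)
    -- w extends v and w' extends w
    (hext₁ : ∀ x : Cp, w (algebraMap Cp K x) = v x)
    (hext₂ : ∀ x : K, w' (algebraMap K L x) = w x)
    (T : K)
    -- w is the Gauss norm: |Σ aᵢ Tⁱ| = maxᵢ |aᵢ|
    (hGauss : ∀ f : Polynomial Cp, w (Polynomial.aeval T f) = ⨆ i, v (f.coeff i))
    -- K is complete ...
    (hKComplete : ∀ s : ℕ → K,
      (∀ ε : ℝ, 0 < ε → ∃ N, ∀ m ≥ N, ∀ n ≥ N, w (s m - s n) < ε) →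
      ∃ a : K, ∀ ε : ℝ, 0 < ε → ∃ N, ∀ n ≥ N, w (s n - a) < ε)
    -- ... and C_p(T) is dense in K, i.e. K is the completion of C_p(T) under the Gauss norm
    (hdense : ∀ x : K, ∀ ε : ℝ, 0 < ε →
      ∃ y ∈ Subfield.closure (Set.range (algebraMap Cp K) ∪ {T}), w (x - y) < ε)
    -- L = K(S) where S^p = T
    (S : L) (hS : S ^ p = algebraMap K L T)
    (hgen : IntermediateField.adjoin K {S} = ⊤) :
    valuedDifferent w hw w' hw' hext₂ = v (p : Cp) :=
  different_of_pth_root_of_gauss_variable_general p hp Cp K L v w hw w' hw' hvp hext₁ hext₂ T hGauss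
    hdense S hS hgen
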